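/- Let R be a commutative ring that is a ℚ-algebra and let a, b ∈ R. The power series f₃ satisfies the formal differential equation (x²/4 − 1)·f₃″ + (1/4 − (a+b)/2)·x·f₃′ + a·b·f₃ = 0 in R[[x]]. -/

import Mathlib

open PowerSeries

noncomputable def f₁ {R : Type*} [CommRing R] [Algebra ℚ R] (a b : R) : R⟦X⟧ :=
  PowerSeries.mk fun n =>
    if n % 2 = 0 then
      ((Nat.factorial n : ℚ))⁻¹ • ∏ r ∈ Finset.range (n / 2), ((a + (r : R)) * (b + (r : R)))
    else 0

noncomputable def f₂ {R : Type*} [CommRing R] [Algebra ℚ R] (a b : R) : R⟦X⟧ :=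
  PowerSeries.mk fun n =>
    if n % 2 = 1 then
      ((Nat.factorial n : ℚ))⁻¹ • ∏ r ∈ Finset.range (n / 2),
        ((a + (r : R) + algebraMap ℚ R (1/2)) * (b + (r : R) + algebraMap ℚ R (1/2)))
    else 0

noncomputable def f₃ {R : Type*} [CommRing R] [Algebra ℚ R] (a b : R) : R⟦X⟧ :=
  PowerSeries.mk fun n =>
    if n % 2 = 0 then
      ((Nat.factorial n : ℚ))⁻¹ • ∏ r ∈ Finset.range (n / 2), ((a - (r : R)) * (b - (r : R)))
    else 0

noncomputable def f₄ {R : Type*} [CommRing R] [Algebra ℚ R] (a b : R) : R⟦X⟧ :=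
  PowerSeries.mk fun n =>
    if n % 2 = 1 then
      ((Nat.factorial n : ℚ))⁻¹ • ∏ r ∈ Finset.range (n / 2),
        ((a - (r : R) - algebraMap ℚ R (1/2)) * (b - (r : R) - algebraMap ℚ R (1/2)))
    else 0


/-!
Comparing coefficients of `X ^ n`, the differential equation says exactly that the coefficients
`c n` of the series obey the two-step recurrence
`4 (n + 1) (n + 2) c (n + 2) = (2a - n) (2b - n) c n`.
For `f₃` the odd coefficients vanish, and passing from `c (2k)` to `c (2k + 2)` multiplies the
product by `(a - k) (b - k)` and the factorial by `(2k + 1) (2k + 2)`, which is that recurrence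
at `n = 2k`.
-/

section
variable {R : Type*} [CommSemiring R]

theorem coeff_X_mul_derivative (f : R⟦X⟧) (n : ℕ) :
    coeff n (X * d⁄dX R f) = n * coeff n f := by
  cases n with
  | zero => simp
  | succ n => rw [coeff_succ_X_mul, coeff_derivative, mul_comm]; push_cast; ring

theorem coeff_derivative_derivative (f : R⟦X⟧) (n : ℕ) :
    coeff n (d⁄dX R (d⁄dX R f)) = (n + 1) * (n + 2) * coeff (n + 2) f := by
  rw [coeff_derivative, coeff_derivative]; push_cast; ring

end

theorem coeff_X_sq_mul_derivative_derivative {R : Type*} [CommRing R] (f : R⟦X⟧) (n : ℕ) :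
    coeff n (X ^ 2 * d⁄dX R (d⁄dX R f)) = n * (n - 1) * coeff n f := by
  cases n with
  | zero => simp
  | succ n =>
    rw [pow_two, mul_assoc, coeff_succ_X_mul, coeff_X_mul_derivative, coeff_derivative]
    push_cast; ring

theorem ode_eq_zero_of_coeff_recurrence {R : Type*} [CommRing R] [Algebra ℚ R] (a b : R)
    (f : R⟦X⟧)
    (hf : ∀ n : ℕ,
      4 * ((n + 1) * (n + 2)) * coeff (n + 2) f = (2 * a - n) * (2 * b - n) * coeff n f) :
    ((1/4 : ℚ) • (X : R⟦X⟧) ^ 2 - 1) * d⁄dX R (d⁄dX R f) +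
      ((1/4 : ℚ) • (1 : R⟦X⟧) - (1/2 : ℚ) • C (a + b)) * X * d⁄dX R f + C (a * b) * f = 0 := by
  have hsplit : ((1/4 : ℚ) • (X : R⟦X⟧) ^ 2 - 1) * d⁄dX R (d⁄dX R f) +
      ((1/4 : ℚ) • (1 : R⟦X⟧) - (1/2 : ℚ) • C (a + b)) * X * d⁄dX R f + C (a * b) * f =
      (1/4 : ℚ) • (X ^ 2 * d⁄dX R (d⁄dX R f)) - d⁄dX R (d⁄dX R f) +
        (1/4 : ℚ) • (X * d⁄dX R f) - (1/2 : ℚ) • (C (a + b) * (X * d⁄dX R f)) + C (a * b) * f := by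
    simp only [sub_mul, smul_mul_assoc, one_mul, mul_assoc]; abel
  have h4 : algebraMap ℚ R (1/4) * 4 = 1 := by
    rw [← map_ofNat (algebraMap ℚ R), ← map_mul]; norm_num
  have h2 : algebraMap ℚ R (1/2) * 2 = 1 := by
    rw [← map_ofNat (algebraMap ℚ R), ← map_mul]; norm_num
  rw [hsplit]
  ext n
  simp only [map_add (coeff n), map_sub (coeff n), map_zero, coeff_smul, coeff_C_mul,
    coeff_X_sq_mul_derivative_derivative, coeff_derivative_derivative, coeff_X_mul_derivative]
  simp only [Algebra.smul_def]
  linear_combination (-algebraMap ℚ R (1/4)) * hf n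
    + ((n + 1) * (n + 2) * coeff (n + 2) f + algebraMap ℚ R (1/2) * (a + b) * n * coeff n f
      - a * b * coeff n f) * h4
    - 2 * algebraMap ℚ R (1/4) * (a + b) * n * coeff n f * h2

section
variable {R : Type*} [CommRing R] [Algebra ℚ R] (a b : R)

theorem coeff_two_mul_f₃ (k : ℕ) :
    coeff (2 * k) (f₃ a b) =
      ((2 * k).factorial : ℚ)⁻¹ • ∏ r ∈ Finset.range k, ((a - r) * (b - r)) := by
  rw [f₃, coeff_mk, if_pos (by omega), Nat.mul_div_cancel_left k two_pos]

theorem coeff_two_mul_add_one_f₃ (k : ℕ) : coeff (2 * k + 1) (f₃ a b) = 0 := by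
  rw [f₃, coeff_mk, if_neg (by omega)]

theorem f₃_coeff_recurrence (n : ℕ) :
    4 * ((n + 1) * (n + 2)) * coeff (n + 2) (f₃ a b) =
      (2 * a - n) * (2 * b - n) * coeff n (f₃ a b) := by
  obtain ⟨k, rfl | rfl⟩ := n.even_or_odd'
  · have hfact : ((2 * k + 1) * (2 * k + 2) : ℚ) * ((2 * (k + 1)).factorial : ℚ)⁻¹ =
        ((2 * k).factorial : ℚ)⁻¹ := by
      rw [show 2 * (k + 1) = 2 * k + 1 + 1 by ring, Nat.factorial_succ, Nat.factorial_succ]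
      push_cast
      field_simp
      ring
    have hfactR := congrArg (algebraMap ℚ R) hfact
    rw [show 2 * k + 2 = 2 * (k + 1) by ring, coeff_two_mul_f₃, coeff_two_mul_f₃,
      Finset.prod_range_succ]
    simp only [map_mul, map_add, map_natCast, map_ofNat, map_one] at hfactR
    simp only [Algebra.smul_def]
    push_cast
    linear_combination
      (4 * (∏ r ∈ Finset.range k, ((a - r) * (b - r))) * (a - k) * (b - k)) * hfactR
  · rw [show 2 * k + 1 + 2 = 2 * (k + 1) + 1 by ring, coeff_two_mul_add_one_f₃,
      coeff_two_mul_add_one_f₃, mul_zero, mul_zero]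

end

/-- `f₃` satisfies `(x²/4 − 1)·f₃″ + (1/4 − (a+b)/2)·x·f₃′ + a·b·f₃ = 0`. -/
theorem stmt5 {R : Type*} [CommRing R] [Algebra ℚ R] (a b : R) :
    ((1/4 : ℚ) • (PowerSeries.X : R⟦X⟧) ^ 2 - 1) * d⁄dX R (d⁄dX R (f₃ a b)) +
      ((1/4 : ℚ) • (1 : R⟦X⟧) - (1/2 : ℚ) • C (a + b)) * PowerSeries.X * d⁄dX R (f₃ a b) +
      C (a * b) * f₃ a b = 0 :=
  ode_eq_zero_of_coeff_recurrence a b (f₃ a b) (f₃_coeff_recurrence a b)
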